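/- Let A be an n×n normal matrix of rank r ≤ n and E Hermitian. Then ‖(A^{1/2})⁺ E (A^{1/2})⁺‖₂ ≤ ‖A⁺E‖₂ and ‖A⁺E‖₂ = ‖EA⁺‖₂. -/

import Mathlib

set_option maxHeartbeats 1000000

open Matrix
open scoped ComplexOrder

/-- The spectral norm (operator 2-norm) of a complex matrix. -/
noncomputable def specNorm {m n : Type*} [Fintype m] [Fintype n] [DecidableEq n]
    (A : Matrix m n ℂ) : ℝ :=
  ‖LinearMap.toContinuousLinearMap (Matrix.toEuclideanLin A)‖

/-- `B` is the Moore–Penrose pseudoinverse of `A` (the four Penrose conditions). -/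
def IsMP {m n : Type*} [Fintype m] [Fintype n]
    (A : Matrix m n ℂ) (B : Matrix n m ℂ) : Prop :=
  A * B * A = A ∧ B * A * B = B ∧ (A * B)ᴴ = A * B ∧ (B * A)ᴴ = B * A

namespace Stmt3Aux

open scoped Matrix.Norms.L2Operator



variable {n : ℕ}

/-- Uniqueness of the Moore-Penrose inverse. -/
theorem mp_unique {A B C : Matrix (Fin n) (Fin n) ℂ}
    (hB : A * B * A = A ∧ B * A * B = B ∧ (A * B)ᴴ = A * B ∧ (B * A)ᴴ = B * A)
    (hC : A * C * A = A ∧ C * A * C = C ∧ (A * C)ᴴ = A * C ∧ (C * A)ᴴ = C * A) :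
    B = C := by
  obtain ⟨hB1, hB2, hB3, hB4⟩ := hB
  obtain ⟨hC1, hC2, hC3, hC4⟩ := hC
  have eB : Bᴴ * Aᴴ = A * B := by rw [← conjTranspose_mul, hB3]
  have eC : Cᴴ * Aᴴ = A * C := by rw [← conjTranspose_mul, hC3]
  have eB' : Aᴴ * Bᴴ = B * A := by rw [← conjTranspose_mul, hB4]
  have eC' : Aᴴ * Cᴴ = C * A := by rw [← conjTranspose_mul, hC4]
  have hA' : Aᴴ = Aᴴ * Cᴴ * Aᴴ := by
    conv_lhs => rw [← hC1]
    rw [conjTranspose_mul, conjTranspose_mul]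
    noncomm_ring
  have hAB : A * B = A * C := by
    calc A * B = Bᴴ * Aᴴ := eB.symm
    _ = Bᴴ * (Aᴴ * Cᴴ * Aᴴ) := by rw [← hA']
    _ = (Bᴴ * Aᴴ) * (Cᴴ * Aᴴ) := by noncomm_ring
    _ = (A * B) * (A * C) := by rw [eB, eC]
    _ = (A * B * A) * C := by noncomm_ring
    _ = A * C := by rw [hB1]
  have hBA : B * A = C * A := by
    calc B * A = Aᴴ * Bᴴ := eB'.symm
    _ = (Aᴴ * Cᴴ * Aᴴ) * Bᴴ := by rw [← hA']
    _ = (Aᴴ * Cᴴ) * (Aᴴ * Bᴴ) := by noncomm_ring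
    _ = (C * A) * (B * A) := by rw [eC', eB']
    _ = C * (A * B * A) := by noncomm_ring
    _ = C * A := by rw [hB1]
  calc B = B * A * B := hB2.symm
  _ = C * A * B := by rw [hBA]
  _ = C * (A * B) := by rw [mul_assoc]
  _ = C * (A * C) := by rw [hAB]
  _ = C * A * C := by rw [mul_assoc]
  _ = C := hC2

theorem vdv_mul {V : Matrix (Fin n) (Fin n) ℂ} (hV1 : Vᴴ * V = 1)
    (a b : Fin n → ℂ) :
    (V * diagonal a * Vᴴ) * (V * diagonal b * Vᴴ) = V * diagonal (fun i => a i * b i) * Vᴴ := by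
  have h : (V * diagonal a * Vᴴ) * (V * diagonal b * Vᴴ)
      = V * (diagonal a * (Vᴴ * V) * diagonal b) * Vᴴ := by noncomm_ring
  rw [h, hV1, mul_one, diagonal_mul_diagonal]

theorem vdv_ct {V : Matrix (Fin n) (Fin n) ℂ} (a : Fin n → ℂ) :
    (V * diagonal a * Vᴴ)ᴴ = V * diagonal (fun i => star (a i)) * Vᴴ := by
  rw [conjTranspose_mul, conjTranspose_mul, conjTranspose_conjTranspose,
    diagonal_conjTranspose, mul_assoc]
  rfl

/-- The canonical MP-inverse of `V * diagonal s * Vᴴ`. -/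
theorem isMP_vdv {V : Matrix (Fin n) (Fin n) ℂ} (hV1 : Vᴴ * V = 1) (s : Fin n → ℂ) :
    let S := V * diagonal s * Vᴴ
    let T := V * diagonal (fun i => (s i)⁻¹) * Vᴴ
    S * T * S = S ∧ T * S * T = T ∧ (S * T)ᴴ = S * T ∧ (T * S)ᴴ = T * S := by
  intro S T
  have h1 : S * T * S = S := by
    show (V * diagonal s * Vᴴ) * (V * diagonal _ * Vᴴ) * (V * diagonal s * Vᴴ) = _
    rw [vdv_mul hV1, vdv_mul hV1]
    have : (fun i => s i * (s i)⁻¹ * (s i)) = s := by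
      funext i; by_cases h : s i = 0
      · simp [h]
      · rw [mul_inv_cancel₀ h, one_mul]
    rw [this]
  have h2 : T * S * T = T := by
    show (V * diagonal _ * Vᴴ) * (V * diagonal s * Vᴴ) * (V * diagonal _ * Vᴴ) = _
    rw [vdv_mul hV1, vdv_mul hV1]
    have : (fun i => (s i)⁻¹ * s i * (s i)⁻¹) = fun i => (s i)⁻¹ := by
      funext i; by_cases h : s i = 0
      · simp [h]
      · rw [inv_mul_cancel₀ h, one_mul]
    rw [this]
  have h3 : (S * T)ᴴ = S * T := by
    show ((V * diagonal s * Vᴴ) * (V * diagonal _ * Vᴴ))ᴴ = _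
    rw [vdv_mul hV1, vdv_ct]
    have : (fun i => star (s i * (s i)⁻¹)) = fun i => s i * (s i)⁻¹ := by
      funext i; by_cases h : s i = 0
      · simp [h]
      · rw [mul_inv_cancel₀ h]; exact star_one ℂ
    rw [this]
  have h4 : (T * S)ᴴ = T * S := by
    show ((V * diagonal _ * Vᴴ) * (V * diagonal s * Vᴴ))ᴴ = _
    rw [vdv_mul hV1, vdv_ct]
    have : (fun i => star ((s i)⁻¹ * s i)) = fun i => (s i)⁻¹ * s i := by
      funext i; by_cases h : s i = 0
      · simp [h]
      · rw [inv_mul_cancel₀ h]; exact star_one ℂ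
    rw [this]
  exact ⟨h1, h2, h3, h4⟩



noncomputable instance matCStar {n : ℕ} : CStarAlgebra (Matrix (Fin n) (Fin n) ℂ) :=
  { (inferInstance : NormedRing (Matrix (Fin n) (Fin n) ℂ)),
    (inferInstance : StarRing (Matrix (Fin n) (Fin n) ℂ)),
    (inferInstance : CStarRing (Matrix (Fin n) (Fin n) ℂ)),
    (inferInstance : NormedAlgebra ℂ (Matrix (Fin n) (Fin n) ℂ)),
    (inferInstance : StarModule ℂ (Matrix (Fin n) (Fin n) ℂ)) with
    complete := (inferInstance : CompleteSpace (Matrix (Fin n) (Fin n) ℂ)).1 }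

variable {n : ℕ}

theorem norm_unitary_left {U : Matrix (Fin n) (Fin n) ℂ} (hU : Uᴴ * U = 1)
    (X : Matrix (Fin n) (Fin n) ℂ) : ‖U * X‖ = ‖X‖ := by
  have h1 : ‖(U * X)ᴴ * (U * X)‖ = ‖U * X‖ * ‖U * X‖ := l2_opNorm_conjTranspose_mul_self _
  have h2 : (U * X)ᴴ * (U * X) = Xᴴ * X := by
    rw [conjTranspose_mul]
    calc Xᴴ * Uᴴ * (U * X) = Xᴴ * (Uᴴ * U) * X := by noncomm_ring
    _ = Xᴴ * X := by rw [hU, mul_one]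
  have h3 : ‖Xᴴ * X‖ = ‖X‖ * ‖X‖ := l2_opNorm_conjTranspose_mul_self _
  rw [h2, h3] at h1
  exact (mul_self_inj (norm_nonneg _) (norm_nonneg _)).mp h1.symm

theorem norm_unitary_right {U : Matrix (Fin n) (Fin n) ℂ} (hU : U * Uᴴ = 1)
    (X : Matrix (Fin n) (Fin n) ℂ) : ‖X * U‖ = ‖X‖ := by
  have h : ‖(X * U)ᴴ‖ = ‖Xᴴ‖ := by
    rw [conjTranspose_mul]
    exact norm_unitary_left (by rw [conjTranspose_conjTranspose, hU]) Xᴴ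
  rwa [l2_opNorm_conjTranspose, l2_opNorm_conjTranspose] at h

theorem spectralRadius_diff (a : Matrix (Fin n) (Fin n) ℂ) :
    spectralRadius ℂ a = ⨆ k ∈ spectrum ℂ a \ {0}, (‖k‖₊ : ENNReal) := by
  rw [spectralRadius]
  apply le_antisymm
  · refine iSup₂_le fun k hk => ?_
    by_cases h0 : k = 0
    · simp [h0]
    · exact le_iSup₂ (f := fun (k : ℂ) (_ : k ∈ spectrum ℂ a \ {0}) => (‖k‖₊ : ENNReal)) k ⟨hk, h0⟩
  · exact iSup₂_le fun k hk =>
      le_iSup₂ (f := fun (k : ℂ) (_ : k ∈ spectrum ℂ a) => (‖k‖₊ : ENNReal)) k hk.1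

theorem spectralRadius_mul_comm (a b : Matrix (Fin n) (Fin n) ℂ) :
    spectralRadius ℂ (a * b) = spectralRadius ℂ (b * a) := by
  rw [spectralRadius_diff, spectralRadius_diff, spectrum.nonzero_mul_comm]

theorem spectralRadius_selfAdjoint {a : Matrix (Fin n) (Fin n) ℂ} (ha : aᴴ = a) :
    spectralRadius ℂ a = (‖a‖₊ : ENNReal) :=
  (Matrix.IsHermitian.isSelfAdjoint ha).spectralRadius_eq_nnnorm

/-- Key inequality: `‖P F U P‖ ≤ ‖F P²‖` for `F, P` selfadjoint, `U` unitary commuting with `P`. -/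
theorem key_ineq [Nonempty (Fin n)] {F U P : Matrix (Fin n) (Fin n) ℂ}
    (hF : Fᴴ = F) (hP : Pᴴ = P) (hU2 : U * Uᴴ = 1)
    (hUP : U * P = P * U) :
    ‖P * F * U * P‖ ≤ ‖F * (P * P)‖ := by
  set G := P * F * U * P with hG
  set N := P * (F * P) with hN
  have hcomm2 : U * (P * P) = P * (P * U) := by
    rw [← mul_assoc, hUP, mul_assoc, hUP, ← mul_assoc, mul_assoc]
  -- Gᴴ expressed
  have hGct : Gᴴ = P * (Uᴴ * (F * P)) := by
    rw [hG, conjTranspose_mul, conjTranspose_mul, conjTranspose_mul, hF, hP]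
  have hNsa : Nᴴ = N := by
    rw [hN, conjTranspose_mul, conjTranspose_mul, hF, hP]
    noncomm_ring
  have hGN : G * Gᴴ = N * N := by
    rw [hGct, hG]
    calc P * F * U * P * (P * (Uᴴ * (F * P)))
        = P * F * ((U * (P * P)) * (Uᴴ * (F * P))) := by noncomm_ring
    _ = P * F * ((P * (P * U)) * (Uᴴ * (F * P))) := by rw [hcomm2]
    _ = P * F * (P * (P * ((U * Uᴴ) * (F * P)))) := by noncomm_ring
    _ = P * F * (P * (P * (F * P))) := by rw [hU2, one_mul]
    _ = N * N := by rw [hN]; noncomm_ring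
  -- norms
  have a1 : ‖Gᴴ * G‖ = ‖G‖ * ‖G‖ := l2_opNorm_conjTranspose_mul_self _
  have a2 : spectralRadius ℂ (Gᴴ * G) = (‖Gᴴ * G‖₊ : ENNReal) :=
    spectralRadius_selfAdjoint (by rw [conjTranspose_mul, conjTranspose_conjTranspose])
  have a3 : spectralRadius ℂ (Gᴴ * G) = spectralRadius ℂ (N * N) := by
    rw [spectralRadius_mul_comm Gᴴ G, hGN]
  have a4 : spectralRadius ℂ (N * N) = (‖N * N‖₊ : ENNReal) :=
    spectralRadius_selfAdjoint (by rw [conjTranspose_mul, hNsa])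
  have a5 : ‖N * N‖ = ‖N‖ * ‖N‖ := by
    have e : N * N = Nᴴ * N := by rw [hNsa]
    rw [e]
    exact l2_opNorm_conjTranspose_mul_self _
  have hGNnorm : ‖G‖ = ‖N‖ := by
    have : (‖Gᴴ * G‖₊ : ENNReal) = (‖N * N‖₊ : ENNReal) := by rw [← a2, a3, a4]
    have h2 : ‖Gᴴ * G‖₊ = ‖N * N‖₊ := ENNReal.coe_inj.mp this
    have h' : ‖Gᴴ * G‖ = ‖N * N‖ := congrArg NNReal.toReal h2
    rw [a1, a5] at h'
    exact (mul_self_inj (norm_nonneg _) (norm_nonneg _)).mp h'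
  -- bound ‖N‖ ≤ ‖F * (P * P)‖
  have b1 : spectralRadius ℂ N = spectralRadius ℂ (F * (P * P)) := by
    rw [hN, spectralRadius_mul_comm P (F * P), mul_assoc]
  have b2 : (‖N‖₊ : ENNReal) ≤ (‖F * (P * P)‖₊ : ENNReal) := by
    rw [← spectralRadius_selfAdjoint hNsa, b1]
    exact spectrum.spectralRadius_le_nnnorm (𝕜 := ℂ) _
  have b3 : ‖N‖ ≤ ‖F * (P * P)‖ := NNReal.coe_le_coe.mpr (ENNReal.coe_le_coe.mp b2)
  rw [hGNnorm]
  exact b3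



theorem specNorm_eq {n : ℕ} (A : Matrix (Fin n) (Fin n) ℂ) : specNorm A = ‖A‖ := rfl

theorem diag_mul {n : ℕ} (a b : Fin n → ℂ) :
    diagonal a * diagonal b = diagonal (fun i => a i * b i) :=
  diagonal_mul_diagonal a b

theorem diag_ct {n : ℕ} (a : Fin n → ℂ) :
    (diagonal a)ᴴ = diagonal (fun i => star (a i)) :=
  diagonal_conjTranspose a

end Stmt3Aux

open Stmt3Aux
open scoped Matrix.Norms.L2Operator

/-- Theorem 2.2.  `A` normal of rank `r ≤ n`, `E` Hermitian.  Then
`‖(A^{1/2})⁺ E (A^{1/2})⁺‖₂ ≤ ‖A⁺E‖₂ = ‖EA⁺‖₂`, where `A^{1/2} = V D^{1/2} Vᴴ`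
is a normal square root built from a spectral decomposition `A = V D Vᴴ`. -/
theorem stmt3 (n r : ℕ) (hr : r ≤ n)
    (A E V B Ap : Matrix (Fin n) (Fin n) ℂ)
    (hnormal : Aᴴ * A = A * Aᴴ) (hE : E.IsHermitian)
    (hrank : A.rank = r)
    (d : Fin n → ℂ)
    (hV : V ∈ Matrix.unitaryGroup (Fin n) ℂ)
    (hAeig : A = V * Matrix.diagonal d * Vᴴ)
    (hB : IsMP (V * Matrix.diagonal (fun i => d i ^ ((1 : ℂ)/2)) * Vᴴ) B)
    (hAp : IsMP A Ap) :
    specNorm (B * E * B) ≤ specNorm (Ap * E) ∧ specNorm (Ap * E) = specNorm (E * Ap) := by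
  rcases Nat.eq_zero_or_pos n with hn | hn
  · -- degenerate case `n = 0`
    subst hn
    haveI : IsEmpty (Fin 0) := Fin.isEmpty
    haveI : Subsingleton (Matrix (Fin 0) (Fin 0) ℂ) :=
      ⟨fun a b => Matrix.ext fun i => i.elim0⟩
    rw [Subsingleton.elim (B * E * B) (Ap * E), Subsingleton.elim (E * Ap) (Ap * E)]
    exact ⟨le_refl _, rfl⟩
  haveI : Nonempty (Fin n) := ⟨⟨0, hn⟩⟩
  -- unitarity of V
  have hV1 : Vᴴ * V = 1 := by
    have h := (Matrix.mem_unitaryGroup_iff').mp hV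
    rwa [Matrix.star_eq_conjTranspose] at h
  have hV2 : V * Vᴴ = 1 := by
    have h := (Matrix.mem_unitaryGroup_iff).mp hV
    rwa [Matrix.star_eq_conjTranspose] at h
  -- the diagonal entries
  set s : Fin n → ℂ := fun i => d i ^ ((1 : ℂ)/2) with hs
  set p : Fin n → ℂ := fun i => (s i)⁻¹ with hp
  set q : Fin n → ℂ := fun i => (d i)⁻¹ with hq
  -- identify B and Ap
  have hBeq : B = V * diagonal p * Vᴴ := mp_unique hB (isMP_vdv hV1 s)
  have hApeq : Ap = V * diagonal q * Vᴴ := by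
    rw [hAeig] at hAp
    exact mp_unique hAp (isMP_vdv hV1 d)
  -- p i * p i = q i
  have hpq : ∀ i, p i * p i = q i := by
    intro i
    by_cases h : d i = 0
    · simp [hp, hq, hs, h, Complex.zero_cpow (by norm_num : (1 : ℂ)/2 ≠ 0)]
    · have hss : s i * s i = d i := by
        rw [hs, ← Complex.cpow_add _ _ h]
        norm_num
      simp only [hp, hq, ← hss, mul_inv]
  -- polar decomposition of the diagonal vector p
  set u : Fin n → ℂ := fun i => if p i = 0 then 1 else p i / (‖p i‖ : ℂ) with hu
  set rr : Fin n → ℂ := fun i => (‖p i‖ : ℂ) with hrr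
  have hur : ∀ i, u i * rr i = p i := by
    intro i
    by_cases h : p i = 0
    · simp [hu, hrr, h]
    · have hnz : (‖p i‖ : ℂ) ≠ 0 := by
        simpa using norm_ne_zero_iff.mpr h
      simp only [hu, hrr, if_neg h]
      exact div_mul_cancel₀ _ hnz
  have huu : ∀ i, star (u i) * u i = 1 := by
    intro i
    by_cases h : p i = 0
    · simp [hu, h]
    · have hnz : (‖p i‖ : ℂ) ≠ 0 := by simpa using norm_ne_zero_iff.mpr h
      simp only [hu, if_neg h]
      rw [RCLike.star_def, map_div₀, Complex.conj_ofReal, div_mul_div_comm,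
        ← Complex.normSq_eq_conj_mul_self, ← Complex.ofReal_mul,
        div_eq_one_iff_eq (by exact_mod_cast mul_ne_zero hnz hnz)]
      rw [Complex.ofReal_inj, Complex.normSq_eq_norm_sq]
      ring
  have huu' : ∀ i, u i * star (u i) = 1 := fun i => by rw [mul_comm]; exact huu i
  -- matrices
  set U : Matrix (Fin n) (Fin n) ℂ := diagonal u with hU
  set P : Matrix (Fin n) (Fin n) ℂ := diagonal rr with hP
  have hUP : U * P = diagonal p := by
    rw [hU, hP, diag_mul]
    exact congrArg diagonal (funext hur)
  have hPU : P * U = diagonal p := by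
    rw [hU, hP, diag_mul]
    refine congrArg diagonal (funext fun i => ?_)
    rw [mul_comm]; exact hur i
  have hUcomm : U * P = P * U := by rw [hUP, hPU]
  have hU1 : Uᴴ * U = 1 := by
    rw [hU, diag_ct, diag_mul, show (fun i => star (u i) * u i) = fun _ => (1 : ℂ) from funext huu]
    exact diagonal_one
  have hU2 : U * Uᴴ = 1 := by
    rw [hU, diag_ct, diag_mul, show (fun i => u i * star (u i)) = fun _ => (1 : ℂ) from funext huu']
    exact diagonal_one
  have hPsa : Pᴴ = P := by
    rw [hP, diag_ct]
    refine congrArg diagonal (funext fun i => ?_)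
    rw [hrr]
    exact Complex.conj_ofReal _
  have hDq : diagonal q = (P * P) * (U * U) := by
    rw [hP, hU, diag_mul, diag_mul, diag_mul]
    refine congrArg diagonal (funext fun i => ?_)
    rw [← hpq i, ← hur i]
    ring
  -- conjugated Hermitian matrix
  set F : Matrix (Fin n) (Fin n) ℂ := Vᴴ * E * V with hF
  have hEsa : Eᴴ = E := hE
  have hFsa : Fᴴ = F := by
    rw [hF, conjTranspose_mul, conjTranspose_mul, conjTranspose_conjTranspose, hEsa]
    noncomm_ring
  -- express the three matrices as unitary conjugates
  have hBEB : B * E * B = V * (diagonal p * F * diagonal p) * Vᴴ := by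
    rw [hBeq, hF]
    noncomm_ring
  have hApE : Ap * E = V * (diagonal q * F) * Vᴴ := by
    rw [hApeq, hF]
    conv_lhs => rw [show E = E * (V * Vᴴ) by rw [hV2, mul_one]]
    noncomm_ring
  have hEAp : E * Ap = V * (F * diagonal q) * Vᴴ := by
    rw [hApeq, hF]
    conv_lhs => rw [show E = (V * Vᴴ) * E by rw [hV2, one_mul]]
    noncomm_ring
  -- pass to norms
  have hVconj : ∀ X : Matrix (Fin n) (Fin n) ℂ, ‖V * X * Vᴴ‖ = ‖X‖ := by
    intro X
    rw [mul_assoc, norm_unitary_left hV1]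
    exact norm_unitary_right (by rw [conjTranspose_conjTranspose, hV1]) X
  have hDq' : diagonal q = U * (U * (P * P)) := by
    rw [hP, hU, diag_mul, diag_mul, diag_mul]
    refine congrArg diagonal (funext fun i => ?_)
    rw [← hpq i, ← hur i]
    ring
  have hRight : ‖diagonal q * F‖ = ‖F * (P * P)‖ := by
    have e1 : diagonal q * F = U * (U * ((P * P) * F)) := by
      rw [hDq']; noncomm_ring
    have e2 : (F * (P * P))ᴴ = (P * P) * F := by
      rw [conjTranspose_mul, conjTranspose_mul, hFsa, hPsa]
    rw [e1, norm_unitary_left hU1, norm_unitary_left hU1, ← e2, l2_opNorm_conjTranspose]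
  have hLeft : ‖F * diagonal q‖ = ‖F * (P * P)‖ := by
    have e1 : F * diagonal q = ((F * (P * P)) * U) * U := by
      rw [hDq]; noncomm_ring
    rw [e1, norm_unitary_right hU2, norm_unitary_right hU2]
  have hKey : ‖diagonal p * F * diagonal p‖ ≤ ‖F * (P * P)‖ := by
    have e : diagonal p * F * diagonal p = U * (P * F * U * P) := by
      rw [← hUP]; noncomm_ring
    rw [e, norm_unitary_left hU1]
    exact key_ineq hFsa hPsa hU2 hUcomm
  constructor
  · rw [specNorm_eq, specNorm_eq, hBEB, hApE, hVconj, hVconj, hRight]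
    exact hKey
  · rw [specNorm_eq, specNorm_eq, hApE, hEAp, hVconj, hVconj, hRight, hLeft]
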